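/- In the clique-reduction SMTI instance I (defined in the context), if M is a complete stable matching, then the set W of r vertices of G corresponding to the type-4 women matched to type-2 men induces a clique in G. -/

import Mathlib

variable (V : Type) [Fintype V] [DecidableEq V] (G : SimpleGraph V) [DecidableRel G.Adj] (r : ℕ)

/-- The men of the clique-reduction instance: type-1 men are the edges of `G`,
then `r` type-2 men and `card V − r` type-3 men. -/
abbrev CliqueMen : Type :=
  {e : Sym2 V // e ∈ G.edgeFinset} ⊕ (Fin r ⊕ Fin (Fintype.card V - r))

/-- The women of the clique-reduction instance: type-4 women are the vertices of
`G`, then `binom(r,2)` type-5 women and `m − binom(r,2)` type-6 women. -/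
abbrev CliqueWom : Type :=
  V ⊕ (Fin (r.choose 2) ⊕ Fin (G.edgeFinset.card - r.choose 2))

/-- Preference list of a man (smaller rank = more preferred, `none` = unacceptable).
A type-1 man `e` ranks: type 6 (rank 0), then his two exceptional women — the
endpoints of `e` — (rank 1), then type 5 (rank 2), then the other type-4 women
(rank 3).  Types 2 and 3 find exactly the type-4 women acceptable, all tied. -/
def cliqueManRank : CliqueMen V G r → CliqueWom V G r → Option ℕ
  | Sum.inl e, Sum.inl v => if v ∈ (e.1 : Sym2 V) then some 1 else some 3
  | Sum.inl _, Sum.inr (Sum.inl _) => some 2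
  | Sum.inl _, Sum.inr (Sum.inr _) => some 0
  | Sum.inr _, Sum.inl _ => some 0
  | Sum.inr _, Sum.inr _ => none

/-- Preference list of a woman: type-4 women rank type 2 (rank 0), then type 1
(rank 1), then type 3 (rank 2); types 5 and 6 find exactly the type-1 men
acceptable, all tied. -/
def cliqueWomRank : CliqueWom V G r → CliqueMen V G r → Option ℕ
  | Sum.inl _, Sum.inl _ => some 1
  | Sum.inl _, Sum.inr (Sum.inl _) => some 0
  | Sum.inl _, Sum.inr (Sum.inr _) => some 2
  | Sum.inr _, Sum.inl _ => some 0
  | Sum.inr _, Sum.inr _ => none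

/-- `OptLt a b`: rank `a` is strictly better than rank `b` (where `none` means
unacceptable/unmatched and any acceptable rank beats it). -/
def OptLt (a b : Option ℕ) : Prop := ∃ x, a = some x ∧ ∀ y, b = some y → x < y

/-- A complete matching (a bijection between men and women) is stable if it only
matches mutually acceptable pairs and admits no blocking pair. -/
def CliqueStableCSM (M : CliqueMen V G r ≃ CliqueWom V G r) : Prop :=
  (∀ a, (cliqueManRank V G r a (M a)).isSome = true ∧
        (cliqueWomRank V G r (M a) a).isSome = true) ∧
  ¬ ∃ a w, M a ≠ w ∧ OptLt (cliqueManRank V G r a w) (cliqueManRank V G r a (M a)) ∧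
      OptLt (cliqueWomRank V G r w a) (cliqueWomRank V G r w (M.symm w))

/-! The type-2 and type-3 men hold type-4 women, and as there are at least `card V` of them
they hold all of these; the type-5 women hold edge men. An endpoint of an edge held by a type-5 woman cannot be
held by a type-3 man, or the two would block, so the `binom(r,2)` edges held by type-5 women all
lie inside the `r`-set `W`. As `W` spans only `binom(r,2)` pairs, every pair of `W` is an edge. -/

open Finset

/-- The edges inside `s` are among the `(#s).choose 2` non-diagonal pairs from `s`, so having
that many edges forces every such pair to be an edge. -/
theorem SimpleGraph.isClique_of_choose_two_le_card_edges {α : Type*} [Fintype α]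
    [DecidableEq α] (H : SimpleGraph α) [DecidableRel H.Adj] (s : Finset α)
    (h : (#s).choose 2 ≤ #{e ∈ H.edgeFinset | ∀ v ∈ e, v ∈ s}) :
    H.IsClique (s : Set α) := by
  set pairs := s.offDiag.image Sym2.mk.uncurry
  have hsub : {e ∈ H.edgeFinset | ∀ v ∈ e, v ∈ s} ⊆ pairs := by
    intro e he
    obtain ⟨he, hes⟩ := mem_filter.mp he
    induction e using Sym2.ind with
    | _ v w =>
      have hvw : v ≠ w := H.ne_of_adj (H.mem_edgeFinset.mp he)
      exact mem_image.mpr ⟨(v, w), mem_offDiag.mpr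
        ⟨hes v (Sym2.mem_mk_left v w), hes w (Sym2.mem_mk_right v w), hvw⟩, rfl⟩
  have heq := eq_of_subset_of_card_le hsub (by rw [Sym2.card_image_offDiag]; exact h)
  intro v hv w hw hvw
  have hpair : s(v, w) ∈ pairs := mem_image.mpr ⟨(v, w), mem_offDiag.mpr ⟨hv, hw, hvw⟩, rfl⟩
  rw [← heq] at hpair
  exact H.mem_edgeFinset.mp (mem_filter.mp hpair).1

theorem optLt_some_some {a b : ℕ} : OptLt (some a) (some b) ↔ a < b := by
  simp [OptLt]

def typeTwoPartners (M : CliqueMen V G r ≃ CliqueWom V G r) : Finset V :=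
  univ.filter fun v : V => ∃ i : Fin r, M (Sum.inr (Sum.inl i)) = Sum.inl v

namespace CliqueStableCSM

variable {V G r} {M : CliqueMen V G r ≃ CliqueWom V G r} (hM : CliqueStableCSM V G r M)
include hM

theorem exists_apply_inr_eq_inl (x : Fin r ⊕ Fin (Fintype.card V - r)) :
    ∃ v, M (Sum.inr x) = Sum.inl v := by
  have hacc := (hM.1 (Sum.inr x)).1
  rcases h : M (Sum.inr x) with v | (_ | _)
  · exact ⟨v, rfl⟩
  all_goals simp [h, cliqueManRank] at hacc

theorem exists_symm_typeFive_eq_inl (j : Fin (r.choose 2)) :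
    ∃ e, M.symm (Sum.inr (Sum.inl j)) = Sum.inl e := by
  have hacc := (hM.1 (M.symm (Sum.inr (Sum.inl j)))).2
  rw [M.apply_symm_apply] at hacc
  rcases h : M.symm (Sum.inr (Sum.inl j)) with e | (_ | _)
  · exact ⟨e, rfl⟩
  all_goals simp [h, cliqueWomRank] at hacc

noncomputable def partnerVertex (x : Fin r ⊕ Fin (Fintype.card V - r)) : V :=
  (hM.exists_apply_inr_eq_inl x).choose

theorem apply_inr (x : Fin r ⊕ Fin (Fintype.card V - r)) :
    M (Sum.inr x) = Sum.inl (hM.partnerVertex x) :=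
  (hM.exists_apply_inr_eq_inl x).choose_spec

theorem partnerVertex_injective : Function.Injective hM.partnerVertex := fun x y hxy =>
  Sum.inr_injective (M.injective (by rw [hM.apply_inr, hM.apply_inr, hxy]))

/-- There are `r + (card V - r) ≥ card V` type-2 and type-3 men, so they exhaust the vertices. -/
theorem partnerVertex_surjective : Function.Surjective hM.partnerVertex := by
  have hle := Fintype.card_le_of_injective _ hM.partnerVertex_injective
  simp only [Fintype.card_sum, Fintype.card_fin] at hle
  refine ((Fintype.bijective_iff_injective_and_card _).mpr ⟨hM.partnerVertex_injective, ?_⟩).2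
  simp only [Fintype.card_sum, Fintype.card_fin]
  omega

noncomputable def typeFiveEdge (j : Fin (r.choose 2)) : {e : Sym2 V // e ∈ G.edgeFinset} :=
  (hM.exists_symm_typeFive_eq_inl j).choose

theorem apply_typeFiveEdge (j : Fin (r.choose 2)) :
    M (Sum.inl (hM.typeFiveEdge j)) = Sum.inr (Sum.inl j) := by
  rw [typeFiveEdge, ← (hM.exists_symm_typeFive_eq_inl j).choose_spec, M.apply_symm_apply]

theorem typeFiveEdge_injective :
    Function.Injective fun j => (hM.typeFiveEdge j : Sym2 V) := fun i j hij => by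
  have h := congrArg M (congrArg Sum.inl (Subtype.ext hij))
  simpa only [hM.apply_typeFiveEdge, Sum.inr.injEq, Sum.inl.injEq] using h

/-- If an endpoint `v` of such an edge were matched to a type-3 man, the edge man (who ranks `v`
above type 5) and `v` (who ranks type 1 above type 3) would block `M`. -/
theorem mem_typeTwoPartners_of_mem_typeFiveEdge {j : Fin (r.choose 2)} {v : V}
    (hv : v ∈ (hM.typeFiveEdge j : Sym2 V)) : v ∈ typeTwoPartners V G r M := by
  obtain ⟨x, rfl⟩ := hM.partnerVertex_surjective v
  rcases x with i | k
  · exact mem_filter.mpr ⟨mem_univ _, i, hM.apply_inr _⟩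
  · refine (hM.2 ⟨Sum.inl (hM.typeFiveEdge j), Sum.inl (hM.partnerVertex (Sum.inr k)), ?_⟩).elim
    have hsymm : M.symm (Sum.inl (hM.partnerVertex (Sum.inr k))) = Sum.inr (Sum.inr k) := by
      rw [← hM.apply_inr, M.symm_apply_apply]
    simp [hM.apply_typeFiveEdge, hsymm, cliqueManRank, cliqueWomRank, hv, optLt_some_some]

theorem card_typeTwoPartners : #(typeTwoPartners V G r M) = r := by
  have himage : typeTwoPartners V G r M = univ.image fun i => hM.partnerVertex (Sum.inl i) := by
    ext v
    simp [typeTwoPartners, hM.apply_inr, eq_comm]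
  rw [himage, card_image_of_injective _
    fun _ _ h => Sum.inl_injective (hM.partnerVertex_injective h), card_univ, Fintype.card_fin]

theorem choose_two_le_card_edges_typeTwoPartners :
    r.choose 2 ≤ #{e ∈ G.edgeFinset | ∀ v ∈ e, v ∈ typeTwoPartners V G r M} := by
  simpa using card_le_card_of_injOn (s := univ) (fun j => (hM.typeFiveEdge j : Sym2 V))
    (fun j _ => mem_filter.mpr ⟨(hM.typeFiveEdge j).2,
      fun _ hv => hM.mem_typeTwoPartners_of_mem_typeFiveEdge hv⟩)
    (hM.typeFiveEdge_injective.injOn)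

end CliqueStableCSM

theorem complete_stable_matching_gives_clique
    (M : CliqueMen V G r ≃ CliqueWom V G r)
    (hM : CliqueStableCSM V G r M) :
    (Finset.univ.filter fun v : V =>
        ∃ i : Fin r, M (Sum.inr (Sum.inl i)) = Sum.inl v).card = r ∧
    G.IsClique ((Finset.univ.filter fun v : V =>
        ∃ i : Fin r, M (Sum.inr (Sum.inl i)) = Sum.inl v) : Finset V) := by
  have hcard := hM.card_typeTwoPartners
  refine ⟨hcard, G.isClique_of_choose_two_le_card_edges (typeTwoPartners V G r M) ?_⟩
  rw [hcard]
  exact hM.choose_two_le_card_edges_typeTwoPartners
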